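/- If G is a connected graph with n vertices and m edges, then b(G) ≤ 4m/n − 1; equivalently m ≥ n(b(G)+1)/4. -/

import Mathlib

/-!
Take `x ≠ y` and a vertex `w` that is `x` or a common neighbour, and delete the at most
`deg x + deg y - 1` edges at `x` or `y` other than `yw`. Then `x` is isolated and `y` is isolated
or pendant at `w`, so some minimum dominating set of the new graph contains `x` together with a
`G`-neighbour of `x`; dropping `x` leaves a dominating set of `G`, hence `b(G) < deg x + deg y`.
A pair with `n (deg x + deg y) ≤ 4m` exists: otherwise the closed neighbourhoods of the vertices
with `n deg v ≤ 2m` are pairwise disjoint and each carries a positive total of the excess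
`n deg v - 2m`, whose sum over all vertices is zero.
-/

open SimpleGraph

variable {V : Type*}

/-- `S` is a dominating set of `G`: every vertex is in `S` or has a neighbor in `S`. -/
def SimpleGraph.IsDomSet (G : SimpleGraph V) (S : Finset V) : Prop :=
  ∀ v : V, v ∈ S ∨ ∃ u ∈ S, G.Adj u v

/-- The domination number of a finite graph. -/
noncomputable def SimpleGraph.domNum [Fintype V] (G : SimpleGraph V) : ℕ :=
  sInf {n | ∃ S : Finset V, S.card = n ∧ G.IsDomSet S}

/-- The bondage number: the minimum size of a set of edges of `G` whose removal
increases the domination number. -/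
noncomputable def SimpleGraph.bondageNum [Fintype V] (G : SimpleGraph V) : ℕ :=
  sInf {n | ∃ B : Finset (Sym2 V), B.card = n ∧ ↑B ⊆ G.edgeSet ∧
    G.domNum < (G.deleteEdges ↑B).domNum}

open Finset

namespace SimpleGraph

section Domination

variable {G H : SimpleGraph V} {D : Finset V} {x y w u : V}

lemma IsDomSet.erase_of_isolated [DecidableEq V] (hHG : H ≤ G) (hD : H.IsDomSet D)
    (hx : ∀ v, ¬H.Adj x v) (hu : u ∈ D) (hxu : G.Adj x u) : G.IsDomSet (D.erase x) := by
  intro v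
  by_cases hvx : v = x
  · exact Or.inr ⟨u, mem_erase.2 ⟨hxu.ne', hu⟩, hvx ▸ hxu.symm⟩
  rcases hD v with hv | ⟨u', hu', hu'v⟩
  · exact Or.inl (mem_erase.2 ⟨hvx, hv⟩)
  · exact Or.inr ⟨u', mem_erase.2 ⟨fun h => hx v (h ▸ hu'v), hu'⟩, hHG hu'v⟩

lemma IsDomSet.mem_of_isolated (hD : H.IsDomSet D) (hy : ∀ v, ¬H.Adj y v) : y ∈ D :=
  (hD y).resolve_right fun ⟨v, _, hvy⟩ => hy v hvy.symm

lemma IsDomSet.insert_erase_of_adj_iff [DecidableEq V] (hD : H.IsDomSet D)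
    (hy : ∀ v, H.Adj y v ↔ v = w) : H.IsDomSet (insert w (D.erase y)) := by
  intro v
  by_cases hvw : v = w
  · exact Or.inl (by simp [hvw])
  by_cases hvy : v = y
  · exact Or.inr ⟨w, mem_insert_self w _, hvy ▸ ((hy w).2 rfl).symm⟩
  rcases hD v with hv | ⟨u, hu, huv⟩
  · exact Or.inl (mem_insert_of_mem (mem_erase.2 ⟨hvy, hv⟩))
  · have huy : u ≠ y := fun h => hvw ((hy v).1 (h ▸ huv))
    exact Or.inr ⟨u, mem_insert_of_mem (mem_erase.2 ⟨huy, hu⟩), huv⟩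

variable [Fintype V]

lemma exists_isDomSet_card_eq_domNum (G : SimpleGraph V) :
    ∃ S : Finset V, S.card = G.domNum ∧ G.IsDomSet S :=
  Nat.sInf_mem (⟨_, univ, rfl, fun v => Or.inl (mem_univ v)⟩ :
    Set.Nonempty {n | ∃ S : Finset V, S.card = n ∧ G.IsDomSet S})

lemma IsDomSet.domNum_le {S : Finset V} (h : G.IsDomSet S) : G.domNum ≤ S.card :=
  Nat.sInf_le ⟨S, rfl, h⟩

lemma domNum_lt_of_isolated [DecidableEq V] (hHG : H ≤ G) (hx : ∀ v, ¬H.Adj x v)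
    (hD : H.IsDomSet D) (hDcard : D.card ≤ H.domNum) (hu : u ∈ D) (hxu : G.Adj x u) :
    G.domNum < H.domNum := by
  calc G.domNum ≤ (D.erase x).card := (hD.erase_of_isolated hHG hx hu hxu).domNum_le
    _ < D.card := card_erase_lt_of_mem (hD.mem_of_isolated hx)
    _ ≤ H.domNum := hDcard

lemma domNum_lt_of_isolated_of_isolated [DecidableEq V] (hHG : H ≤ G) (hx : ∀ v, ¬H.Adj x v)
    (hy : ∀ v, ¬H.Adj y v) (hxy : G.Adj x y) : G.domNum < H.domNum := by
  obtain ⟨D, hDcard, hD⟩ := H.exists_isDomSet_card_eq_domNum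
  exact domNum_lt_of_isolated hHG hx hD hDcard.le (hD.mem_of_isolated hy) hxy

lemma domNum_lt_of_isolated_of_adj_iff [DecidableEq V] (hHG : H ≤ G) (hx : ∀ v, ¬H.Adj x v)
    (hy : ∀ v, H.Adj y v ↔ v = w) (hxw : G.Adj x w) : G.domNum < H.domNum := by
  obtain ⟨D, hDcard, hD⟩ := H.exists_isDomSet_card_eq_domNum
  by_cases hwD : w ∈ D
  · exact domNum_lt_of_isolated hHG hx hD hDcard.le hwD hxw
  have hyD : y ∈ D := (hD y).resolve_right fun ⟨u, hu, huy⟩ => hwD ((hy u).1 huy.symm ▸ hu)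
  refine domNum_lt_of_isolated hHG hx (hD.insert_erase_of_adj_iff hy) ?_ (mem_insert_self w _) hxw
  calc (insert w (D.erase y)).card ≤ (D.erase y).card + 1 := card_insert_le _ _
    _ = H.domNum := by rw [card_erase_add_one hyD, hDcard]

lemma bondageNum_le_card {B : Finset (Sym2 V)} (hB : ↑B ⊆ G.edgeSet)
    (hlt : G.domNum < (G.deleteEdges ↑B).domNum) : G.bondageNum ≤ B.card :=
  Nat.sInf_le ⟨B, rfl, hB, hlt⟩

end Domination

lemma deleteEdges_not_adj_of_incidenceSet_subset {G : SimpleGraph V} {s : Set (Sym2 V)} {x : V}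
    (hx : G.incidenceSet x ⊆ s) (v : V) : ¬(G.deleteEdges s).Adj x v := by
  rw [deleteEdges_adj]
  exact fun ⟨hxv, hs⟩ => hs (hx (G.mk'_mem_incidenceSet_left_iff.2 hxv))

lemma bondageNum_add_one_le_degree_add_degree [Fintype V] (G : SimpleGraph V) [DecidableRel G.Adj]
    {x y w : V} (hxy : x ≠ y) (hxw : w = x ∨ G.Adj x w) (hwy : G.Adj w y) :
    G.bondageNum + 1 ≤ G.degree x + G.degree y := by
  classical
  set B := G.incidenceFinset x ∪ (G.incidenceFinset y).erase s(y, w) with hBdef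
  set H := G.deleteEdges ↑B
  have hywB : s(y, w) ∈ G.incidenceFinset y :=
    (G.mem_incidenceFinset _ _).2 (G.mk'_mem_incidenceSet_left_iff.2 hwy.symm)
  have hB : ↑B ⊆ G.edgeSet := by
    rw [hBdef, coe_union, coe_erase, coe_incidenceFinset, coe_incidenceFinset]
    exact Set.union_subset (G.incidenceSet_subset x)
      (Set.sdiff_subset.trans (G.incidenceSet_subset y))
  have hcard : B.card + 1 ≤ G.degree x + G.degree y := by
    have hle : B.card ≤ _ := card_union_le _ _
    rw [card_erase_of_mem hywB, card_incidenceFinset_eq_degree,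
      card_incidenceFinset_eq_degree] at hle
    have := (G.degree_pos_iff_exists_adj y).2 ⟨w, hwy.symm⟩
    omega
  have hx : ∀ v, ¬H.Adj x v := by
    refine deleteEdges_not_adj_of_incidenceSet_subset ?_
    rw [hBdef, coe_union, coe_incidenceFinset]
    exact Set.subset_union_left
  have hy : ∀ v, H.Adj y v → v = w := by
    intro v hyv
    simp only [H, deleteEdges_adj] at hyv
    by_contra hvw
    refine hyv.2 (mem_union_right _ (mem_erase.2 ⟨fun h => hvw (Sym2.congr_right.1 h), ?_⟩))
    exact (G.mem_incidenceFinset _ _).2 (G.mk'_mem_incidenceSet_left_iff.2 hyv.1)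
  suffices G.domNum < H.domNum by
    have := bondageNum_le_card hB this
    omega
  rcases hxw with rfl | hxw
  · exact domNum_lt_of_isolated_of_isolated (deleteEdges_le _) hx
      (fun v hyv => hx y (hy v hyv ▸ hyv.symm)) hwy
  refine domNum_lt_of_isolated_of_adj_iff (deleteEdges_le _) hx (fun v => ⟨hy v, ?_⟩) hxw
  rintro rfl
  simp [H, B, mk'_mem_incidenceSet_iff, hwy.symm, hxy, hxw.ne]

section Averaging

variable [Fintype V] (G : SimpleGraph V) [DecidableRel G.Adj]
  {α : Type*} [AddCommGroup α] [LinearOrder α] [IsOrderedAddMonoid α]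

lemma sum_insert_neighborFinset_pos [DecidableEq V] {f : V → α} {x : V} (hdeg : 0 < G.degree x)
    (hfx : f x ≤ 0) (hadj : ∀ w, G.Adj x w → 0 < f x + f w) :
    0 < ∑ v ∈ insert x (G.neighborFinset x), f v := by
  rw [sum_insert (G.notMem_neighborFinset_self x)]
  have hnbrs : G.degree x • -f x < ∑ w ∈ G.neighborFinset x, f w := by
    rw [← card_neighborFinset_eq_degree, ← sum_const]
    refine sum_lt_sum_of_nonempty (card_pos.1 (by rwa [card_neighborFinset_eq_degree])) ?_
    exact fun w hw => neg_lt_iff_pos_add'.2 (hadj w ((G.mem_neighborFinset x w).1 hw))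
  obtain ⟨d, hd⟩ := Nat.exists_eq_add_one_of_ne_zero hdeg.ne'
  rw [hd, succ_nsmul] at hnbrs
  calc 0 ≤ d • -f x := nsmul_nonneg (neg_nonneg.2 hfx) d
    _ = f x + (d • -f x + -f x) := by abel
    _ < _ := (add_lt_add_iff_left _).2 hnbrs

lemma exists_ne_adj_add_nonpos [Nonempty V] (hdeg : ∀ v, 0 < G.degree v) (f : V → α)
    (hf : ∑ v, f v ≤ 0) :
    ∃ x y w, x ≠ y ∧ (w = x ∨ G.Adj x w) ∧ G.Adj w y ∧ f x + f y ≤ 0 := by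
  classical
  by_contra! hfar
  set N : V → Finset V := fun x => insert x (G.neighborFinset x)
  set L := univ.filter fun v => f v ≤ 0
  have hL : L.Nonempty := by
    obtain ⟨v, -, hv⟩ := exists_le_of_sum_le (f := f) (g := 0) univ_nonempty (by simpa using hf)
    exact ⟨v, mem_filter.2 ⟨mem_univ v, hv⟩⟩
  have hdisj : (L : Set V).PairwiseDisjoint N := by
    intro x hx y hy hxy
    rw [Function.onFun]
    have hxy' : f x + f y ≤ 0 := add_nonpos (mem_filter.1 hx).2 (mem_filter.1 hy).2
    refine Finset.disjoint_left.2 fun v hvx hvy => ?_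
    simp only [N, mem_insert, mem_neighborFinset] at hvx hvy
    rcases hvx with rfl | hxv <;> rcases hvy with rfl | hyv
    · exact hxy rfl
    · exact (hfar v y v hxy (Or.inl rfl) hyv.symm).not_ge hxy'
    · exact (hfar x v x hxy (Or.inl rfl) hxv).not_ge hxy'
    · exact (hfar x y v hxy (Or.inr hxv) hyv.symm).not_ge hxy'
  have hpos : 0 < ∑ v ∈ L.biUnion N, f v := by
    rw [sum_biUnion hdisj]
    refine sum_pos (fun x hx => ?_) hL
    exact G.sum_insert_neighborFinset_pos (hdeg x) (mem_filter.1 hx).2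
      fun w hw => hfar x w x hw.ne (Or.inl rfl) hw
  have hle : ∑ v ∈ L.biUnion N, f v ≤ ∑ v, f v := by
    refine sum_le_sum_of_subset_of_nonneg (subset_univ _) fun v _ hv => ?_
    have hvL : v ∉ L := fun h => hv (mem_biUnion.2 ⟨v, h, mem_insert_self v _⟩)
    simp only [L, mem_filter, mem_univ, true_and, not_le] at hvL
    exact hvL.le
  exact (hpos.trans_le (hle.trans hf)).false

end Averaging

end SimpleGraph

theorem bondage_le_four_m_div_n [Fintype V] (G : SimpleGraph V) [DecidableRel G.Adj]
    (hG : G.Connected) (h2 : 2 ≤ Fintype.card V) :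
    Fintype.card V * (G.bondageNum + 1) ≤ 4 * G.edgeFinset.card := by
  have : Nontrivial V := Fintype.one_lt_card_iff_nontrivial.1 h2
  set n := Fintype.card V
  set m := G.edgeFinset.card
  have hexcess : ∑ v, ((n * G.degree v : ℕ) - 2 * m : ℤ) = 0 := by
    rw [sum_sub_distrib, ← Nat.cast_sum, ← mul_sum, sum_degrees_eq_twice_card_edges]
    simp [n, m]
  obtain ⟨x, y, w, hxy, hxw, hwy, hle⟩ := G.exists_ne_adj_add_nonpos
    (fun v => hG.preconnected.degree_pos_of_nontrivial v) _ hexcess.le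
  calc n * (G.bondageNum + 1) ≤ n * (G.degree x + G.degree y) :=
        Nat.mul_le_mul_left _ (G.bondageNum_add_one_le_degree_add_degree hxy hxw hwy)
    _ ≤ 4 * m := by
        zify
        push_cast at hle
        linarith
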